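/- Suppose the loss is self-bounded (|f'(u)| ≤ f(u)), the gradient-descent iterates satisfy the descent condition F̂(w_{t+1}) ≤ F̂(w_t) − (η/2)‖∇F̂(w_t)‖² for all t ≥ 0, and w ∈ ℝ^{md} and the width m satisfy √m ≥ 2LR²·‖w − w_t‖² for all t ∈ {0,1,…,T−1}. Then (1/T)·Σ_{t=1}^T F̂(w_t) ≤ 2·F̂(w) + 2‖w − w_0‖²/(ηT) + F̂(w_0)/(2T). -/

import Mathlib

open scoped BigOperators

/-- Two-layer network `Φ(w,x) = (1/√m) ∑_j a_j σ(⟨w_j, x⟩)`. -/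
noncomputable def Phi {m d : ℕ} (a : Fin m → ℝ) (σ : ℝ → ℝ)
    (w : EuclideanSpace ℝ (Fin m × Fin d)) (x : EuclideanSpace ℝ (Fin d)) : ℝ :=
  (1 / Real.sqrt m) * ∑ j : Fin m, a j * σ (∑ i : Fin d, w (j, i) * x i)

/-- Empirical loss `F̂(w) = (1/n) ∑_i f(y_i Φ(w, x_i))`. -/
noncomputable def empLoss {m d n : ℕ} (a : Fin m → ℝ) (σ f : ℝ → ℝ)
    (x : Fin n → EuclideanSpace ℝ (Fin d)) (y : Fin n → ℝ)
    (w : EuclideanSpace ℝ (Fin m × Fin d)) : ℝ :=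
  (1 / (n : ℝ)) * ∑ i : Fin n, f (y i * Phi a σ w (x i))

/-!
Along the segment from `u` to `w` each margin `s ↦ y Φ(u + s (w - u), x)` has second derivative
at most `L R² ‖w - u‖² / √m ≤ 1/2` in absolute value, so it stays within `1/4` of its tangent at
`s = 0`. Convexity of the loss and self-boundedness `|f'| ≤ f` turn this into almost-convexity,
`(3/4) F̂(u) - F̂(w) ≤ ⟪∇F̂(u), u - w⟫`, at every iterate. Together with the descent condition, each
step then gives `F̂(w_{t+1}) - F̂(w_t)/4 ≤ F̂(w) + (‖w - w_t‖² - ‖w - w_{t+1}‖²) / (2η)`, as in the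
analysis of online gradient descent, and summing over `t` telescopes.
-/

open Finset

lemma ConvexOn.add_mul_sub_le_of_hasDerivAt {φ : ℝ → ℝ} (hφ : ConvexOn ℝ Set.univ φ) {φ' x : ℝ}
    (hd : HasDerivAt φ φ' x) (y : ℝ) : φ x + φ' * (y - x) ≤ φ y := by
  rcases lt_trichotomy x y with hxy | rfl | hyx
  · have := hφ.le_slope_of_hasDerivAt (Set.mem_univ x) (Set.mem_univ y) hxy hd
    rw [slope_def_field, le_div_iff₀ (sub_pos.2 hxy)] at this
    linarith
  · simp
  · have := hφ.slope_le_of_hasDerivAt (Set.mem_univ y) (Set.mem_univ x) hyx hd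
    rw [slope_def_field, div_le_iff₀ (sub_pos.2 hyx)] at this
    linarith

lemma neg_mul_sq_div_two_le_sub_sub_mul {h h' h'' : ℝ → ℝ} {K : ℝ}
    (hh : ∀ s, HasDerivAt h (h' s) s) (hh' : ∀ s, HasDerivAt h' (h'' s) s)
    (hK : ∀ s, -K ≤ h'' s) (q p : ℝ) : -(K * (p - q) ^ 2 / 2) ≤ h p - h q - h' q * (p - q) := by
  have hψ : ∀ s, HasDerivAt (fun s => h s + K * s ^ 2 / 2) (h' s + K * s) s := fun s =>
    ((hh s).fun_add (((hasDerivAt_pow 2 s).const_mul K).div_const 2)).congr_deriv (by ring)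
  have hψ' : ∀ s, HasDerivAt (fun s => h' s + K * s) (h'' s + K) s := fun s =>
    ((hh' s).fun_add ((hasDerivAt_id s).const_mul K)).congr_deriv (by ring)
  have hmono : Monotone (fun s => h' s + K * s) :=
    monotone_of_hasDerivAt_nonneg hψ' fun s => show 0 ≤ h'' s + K by linarith [hK s]
  have hconv : ConvexOn ℝ Set.univ (fun s => h s + K * s ^ 2 / 2) := by
    refine Monotone.convexOn_univ_of_deriv (fun s => (hψ s).differentiableAt) ?_
    simpa only [funext fun s => (hψ s).deriv] using hmono
  have := hconv.add_mul_sub_le_of_hasDerivAt (hψ q) p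
  nlinarith

lemma abs_sub_sub_mul_le {h h' h'' : ℝ → ℝ} {K : ℝ}
    (hh : ∀ s, HasDerivAt h (h' s) s) (hh' : ∀ s, HasDerivAt h' (h'' s) s)
    (hK : ∀ s, |h'' s| ≤ K) (q p : ℝ) : |h p - h q - h' q * (p - q)| ≤ K * (p - q) ^ 2 / 2 := by
  have lower := neg_mul_sq_div_two_le_sub_sub_mul hh hh' (fun s => (abs_le.1 (hK s)).1) q p
  have upper := neg_mul_sq_div_two_le_sub_sub_mul (h := -h) (h' := -h') (h'' := -h'')
    (fun s => (hh s).neg) (fun s => (hh' s).neg) (fun s => by simpa using (abs_le.1 (hK s)).2) q p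
  simp only [Pi.neg_apply] at upper
  exact abs_le.2 ⟨lower, by linarith⟩

lemma one_sub_mul_add_deriv_mul_le {f : ℝ → ℝ} (hconv : ConvexOn ℝ Set.univ f)
    (hf : Differentiable ℝ f) (hself : ∀ u, |deriv f u| ≤ f u) {z z' δ ε : ℝ}
    (hz : |z' - z - δ| ≤ ε) : (1 - ε) * f z + deriv f z * δ ≤ f z' := by
  have tangent := hconv.add_mul_sub_le_of_hasDerivAt (hf z).hasDerivAt z'
  have remainder : |deriv f z * (z' - z - δ)| ≤ f z * ε := by
    rw [abs_mul]
    exact mul_le_mul (hself z) hz (abs_nonneg _) ((abs_nonneg _).trans (hself z))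
  linarith [neg_abs_le (deriv f z * (z' - z - δ))]

section Network

variable {m d : ℕ}

def preactivation (w : EuclideanSpace ℝ (Fin m × Fin d)) (x : EuclideanSpace ℝ (Fin d))
    (j : Fin m) : ℝ :=
  ∑ i, w (j, i) * x i

lemma Phi_eq (a : Fin m → ℝ) (σ : ℝ → ℝ) (w : EuclideanSpace ℝ (Fin m × Fin d))
    (x : EuclideanSpace ℝ (Fin d)) :
    Phi a σ w x = (1 / Real.sqrt m) * ∑ j, a j * σ (preactivation w x j) :=
  rfl

lemma preactivation_add_smul (u v : EuclideanSpace ℝ (Fin m × Fin d))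
    (x : EuclideanSpace ℝ (Fin d)) (s : ℝ) (j : Fin m) :
    preactivation (u + s • v) x j = preactivation u x j + s * preactivation v x j := by
  simp only [preactivation, mul_sum, ← sum_add_distrib, PiLp.add_apply,
    PiLp.smul_apply, smul_eq_mul]
  exact sum_congr rfl fun i _ => by ring

lemma sum_preactivation_sq_le (v : EuclideanSpace ℝ (Fin m × Fin d))
    (x : EuclideanSpace ℝ (Fin d)) : ∑ j, preactivation v x j ^ 2 ≤ ‖v‖ ^ 2 * ‖x‖ ^ 2 := by
  rw [EuclideanSpace.norm_sq_eq, EuclideanSpace.norm_sq_eq, Fintype.sum_prod_type, sum_mul]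
  simp only [Real.norm_eq_abs, sq_abs]
  exact sum_le_sum fun j _ => sum_mul_sq_le_sq_mul_sq _ _ _

lemma hasDerivAt_Phi_line (a : Fin m → ℝ) {σ σ' : ℝ → ℝ} (hσ : ∀ z, HasDerivAt σ (σ' z) z)
    (u v : EuclideanSpace ℝ (Fin m × Fin d)) (x : EuclideanSpace ℝ (Fin d)) (s : ℝ) :
    HasDerivAt (fun s : ℝ => Phi a σ (u + s • v) x)
      (Phi (fun j => a j * preactivation v x j) σ' (u + s • v) x) s := by
  simp only [Phi_eq, preactivation_add_smul]
  refine (HasDerivAt.fun_sum fun j _ => ?_).const_mul _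
  have hline : HasDerivAt (fun s => preactivation u x j + s * preactivation v x j)
      (preactivation v x j) s := by
    simpa using ((hasDerivAt_id s).mul_const (preactivation v x j)).const_add (preactivation u x j)
  exact (((hσ _).comp s hline).const_mul (a j)).congr_deriv (by ring)

lemma abs_Phi_le (b : Fin m → ℝ) {τ : ℝ → ℝ} {K : ℝ} (hτ : ∀ z, |τ z| ≤ K)
    (w : EuclideanSpace ℝ (Fin m × Fin d)) (x : EuclideanSpace ℝ (Fin d)) :
    |Phi b τ w x| ≤ K * (∑ j, |b j|) / Real.sqrt m := by
  rw [Phi_eq, abs_mul, abs_of_nonneg (by positivity), one_div_mul_eq_div, mul_comm K,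
    sum_mul]
  gcongr
  refine (abs_sum_le_sum_abs _ _).trans (sum_le_sum fun j _ => ?_)
  rw [abs_mul]
  gcongr
  exact hτ _

lemma abs_Phi_add_sub_sub_le {a : Fin m → ℝ} (ha : ∀ j, |a j| ≤ 1) {σ σ' σ'' : ℝ → ℝ}
    (hσ : ∀ z, HasDerivAt σ (σ' z) z) (hσ' : ∀ z, HasDerivAt σ' (σ'' z) z) {L : ℝ}
    (hσ'' : ∀ z, |σ'' z| ≤ L) (u v : EuclideanSpace ℝ (Fin m × Fin d))
    (x : EuclideanSpace ℝ (Fin d)) :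
    |Phi a σ (u + v) x - Phi a σ u x - Phi (fun j => a j * preactivation v x j) σ' u x|
      ≤ L * (‖v‖ ^ 2 * ‖x‖ ^ 2) / (2 * Real.sqrt m) := by
  set c := preactivation v x
  have hL : 0 ≤ L := (abs_nonneg _).trans (hσ'' 0)
  have hK : ∀ s : ℝ, |Phi (fun j => a j * c j * c j) σ'' (u + s • v) x|
      ≤ L * (‖v‖ ^ 2 * ‖x‖ ^ 2) / Real.sqrt m := fun s => by
    refine (abs_Phi_le _ hσ'' _ _).trans ?_
    gcongr
    calc ∑ j, |a j * c j * c j| ≤ ∑ j, c j ^ 2 := sum_le_sum fun j _ => by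
          rw [abs_mul, abs_mul, mul_assoc, abs_mul_abs_self, ← sq]
          exact mul_le_of_le_one_left (sq_nonneg _) (ha j)
      _ ≤ ‖v‖ ^ 2 * ‖x‖ ^ 2 := sum_preactivation_sq_le v x
  have := abs_sub_sub_mul_le (hasDerivAt_Phi_line a hσ u v x)
    (hasDerivAt_Phi_line (fun j => a j * c j) hσ' u v x) hK 0 1
  simp only [zero_smul, add_zero, one_smul, sub_zero, one_pow, mul_one] at this
  rwa [div_div, mul_comm (Real.sqrt m)] at this

end Network

section Loss

variable {m d n : ℕ} {a : Fin m → ℝ} {σ f : ℝ → ℝ} {x : Fin n → EuclideanSpace ℝ (Fin d)}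
  {y : Fin n → ℝ}

lemma empLoss_nonneg (hf : ∀ u, 0 ≤ f u) (w : EuclideanSpace ℝ (Fin m × Fin d)) :
    0 ≤ empLoss a σ f x y w :=
  mul_nonneg (by positivity) (sum_nonneg fun i _ => hf _)

lemma differentiable_empLoss (hσ : Differentiable ℝ σ) (hf : Differentiable ℝ f) :
    Differentiable ℝ (empLoss a σ f x y) := by
  unfold empLoss
  simp only [Phi_eq, preactivation]
  fun_prop

lemma hasLineDerivAt_empLoss {σ' : ℝ → ℝ} (hσ : ∀ z, HasDerivAt σ (σ' z) z)
    (hf : Differentiable ℝ f) (u v : EuclideanSpace ℝ (Fin m × Fin d)) :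
    HasLineDerivAt ℝ (empLoss a σ f x y)
      (1 / n * ∑ i, deriv f (y i * Phi a σ u (x i))
        * (y i * Phi (fun j => a j * preactivation v (x i) j) σ' u (x i))) u v := by
  unfold HasLineDerivAt empLoss
  refine (HasDerivAt.fun_sum fun i _ => ?_).const_mul _
  have hline := hasDerivAt_Phi_line a hσ u v (x i) 0
  rw [zero_smul, add_zero] at hline
  exact (hf _).hasDerivAt.comp_of_eq 0 (hline.const_mul (y i)) (by simp)

theorem one_sub_mul_empLoss_sub_le_inner_gradient (ha : ∀ j, |a j| ≤ 1) {σ' σ'' : ℝ → ℝ}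
    (hσ : ∀ z, HasDerivAt σ (σ' z) z) (hσ' : ∀ z, HasDerivAt σ' (σ'' z) z) {L : ℝ}
    (hσ'' : ∀ z, |σ'' z| ≤ L) (hfconv : ConvexOn ℝ Set.univ f) (hf : Differentiable ℝ f)
    (hfself : ∀ u, |deriv f u| ≤ f u) {R : ℝ} (hx : ∀ i, ‖x i‖ ≤ R) (hy : ∀ i, |y i| ≤ 1)
    {ε : ℝ} (hε : 0 ≤ ε) {u w : EuclideanSpace ℝ (Fin m × Fin d)}
    (hwidth : L * R ^ 2 * ‖w - u‖ ^ 2 ≤ 2 * ε * Real.sqrt m) :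
    (1 - ε) * empLoss a σ f x y u - empLoss a σ f x y w
      ≤ inner ℝ (gradient (empLoss a σ f x y) u) (u - w) := by
  set v := w - u with hv
  have hL : 0 ≤ L := (abs_nonneg _).trans (hσ'' 0)
  have hgrad : inner ℝ (gradient (empLoss a σ f x y) u) v
      = 1 / n * ∑ i, deriv f (y i * Phi a σ u (x i))
        * (y i * Phi (fun j => a j * preactivation v (x i) j) σ' u (x i)) := by
    rw [inner_gradient_left, ← (differentiable_empLoss (fun z => (hσ z).differentiableAt) hf
      u).lineDeriv_eq_fderiv, (hasLineDerivAt_empLoss hσ hf u v).lineDeriv]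
  have hsample : ∀ i, (1 - ε) * f (y i * Phi a σ u (x i)) + deriv f (y i * Phi a σ u (x i))
      * (y i * Phi (fun j => a j * preactivation v (x i) j) σ' u (x i))
      ≤ f (y i * Phi a σ w (x i)) := by
    intro i
    refine one_sub_mul_add_deriv_mul_le hfconv hf hfself ?_
    rw [show w = u + v by rw [hv, add_sub_cancel], ← mul_sub, ← mul_sub, abs_mul]
    calc _ ≤ 1 * (L * (‖v‖ ^ 2 * ‖x i‖ ^ 2) / (2 * Real.sqrt m)) :=
          mul_le_mul (hy i) (abs_Phi_add_sub_sub_le ha hσ hσ' hσ'' u v (x i)) (abs_nonneg _)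
            zero_le_one
      _ ≤ ε := by
        rw [one_mul]
        refine div_le_of_le_mul₀ (by positivity) hε ?_
        have hxR : ‖x i‖ ^ 2 ≤ R ^ 2 := pow_le_pow_left₀ (norm_nonneg _) (hx i) 2
        calc L * (‖v‖ ^ 2 * ‖x i‖ ^ 2) ≤ L * R ^ 2 * ‖v‖ ^ 2 := by
              rw [mul_comm (‖v‖ ^ 2), ← mul_assoc]; gcongr
          _ ≤ ε * (2 * Real.sqrt m) := by linarith
  have hsum := mul_le_mul_of_nonneg_left (sum_le_sum (s := univ) fun i _ => hsample i)
    (by positivity : (0 : ℝ) ≤ 1 / n)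
  rw [sum_add_distrib, mul_add, ← hgrad, ← mul_sum, mul_left_comm] at hsum
  rw [← neg_sub w u, inner_neg_right]
  change (1 - ε) * empLoss a σ f x y u + _ ≤ empLoss a σ f x y w at hsum
  linarith

end Loss

section GradientDescent

variable {E : Type*} [NormedAddCommGroup E] [InnerProductSpace ℝ E] {G : E → ℝ} {ε η : ℝ}

lemma sub_mul_le_of_descent_of_almostConvex (hη : 0 < η) {u g w : E}
    (hdesc : G (u - η • g) ≤ G u - η / 2 * ‖g‖ ^ 2)
    (hac : (1 - ε) * G u - G w ≤ inner ℝ g (u - w)) :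
    G (u - η • g) - ε * G u ≤ G w + (‖w - u‖ ^ 2 - ‖w - (u - η • g)‖ ^ 2) / (2 * η) := by
  have hdist : ‖w - (u - η • g)‖ ^ 2
      = ‖w - u‖ ^ 2 - 2 * η * inner ℝ g (u - w) + η ^ 2 * ‖g‖ ^ 2 := by
    rw [show w - (u - η • g) = (w - u) + η • g by abel, norm_add_sq_real, inner_smul_right,
      norm_smul, Real.norm_eq_abs, mul_pow, sq_abs, real_inner_comm, ← neg_sub u w,
      inner_neg_right]
    ring
  have hgain : (‖w - u‖ ^ 2 - ‖w - (u - η • g)‖ ^ 2) / (2 * η)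
      = inner ℝ g (u - w) - η / 2 * ‖g‖ ^ 2 := by
    rw [hdist]
    field_simp
    ring
  linarith

theorem sum_Icc_le_of_descent_of_almostConvex (hG : ∀ z, 0 ≤ G z) (hε : 0 ≤ ε) (hη : 0 < η)
    {W g : ℕ → E} {w : E} {T : ℕ} (hrec : ∀ t < T, W (t + 1) = W t - η • g t)
    (hdesc : ∀ t < T, G (W (t + 1)) ≤ G (W t) - η / 2 * ‖g t‖ ^ 2)
    (hac : ∀ t < T, (1 - ε) * G (W t) - G w ≤ inner ℝ (g t) (W t - w)) :
    (1 - ε) * ∑ t ∈ Icc 1 T, G (W t) ≤ T * G w + ‖w - W 0‖ ^ 2 / (2 * η) + ε * G (W 0) := by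
  have hstep : ∀ t ∈ range T, G (W (t + 1)) - ε * G (W t)
      ≤ G w + (‖w - W t‖ ^ 2 - ‖w - W (t + 1)‖ ^ 2) / (2 * η) := fun t ht => by
    rw [mem_range] at ht
    have hdesc_t := hdesc t ht
    rw [hrec t ht] at hdesc_t ⊢
    exact sub_mul_le_of_descent_of_almostConvex hη hdesc_t (hac t ht)
  have htelescope := sum_le_sum hstep
  rw [sum_sub_distrib, sum_add_distrib, sum_const, card_range, nsmul_eq_mul, ← sum_div,
    sum_range_sub' (fun t => ‖w - W t‖ ^ 2), ← mul_sum] at htelescope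
  have hshift : ∑ t ∈ Icc 1 T, G (W t) = ∑ t ∈ range T, G (W (t + 1)) := by
    rw [range_eq_Ico, sum_Ico_add' (fun t => G (W t)), zero_add, Ico_add_one_right_eq_Icc]
  have hends := (sum_range_succ (fun t => G (W t)) T).symm.trans (sum_range_succ' _ T)
  have hlast : 0 ≤ ‖w - W T‖ ^ 2 / (2 * η) := by positivity
  rw [sub_div] at htelescope
  nlinarith [hG (W T)]

end GradientDescent

theorem train_loss_regret_wide_general
    {m d n : ℕ} (L R η : ℝ)
    (a : Fin m → ℝ) (ha : ∀ j, a j = 1 ∨ a j = -1)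
    (σ : ℝ → ℝ) (hσ : ContDiff ℝ 2 σ)
    (hσ'' : ∀ u, |deriv (deriv σ) u| ≤ L)
    (f : ℝ → ℝ) (hf : ContDiff ℝ 2 f) (hfconv : ConvexOn ℝ Set.univ f)
    (hfself : ∀ u, |deriv f u| ≤ f u)
    (x : Fin n → EuclideanSpace ℝ (Fin d)) (y : Fin n → ℝ)
    (hx : ∀ i, ‖x i‖ ≤ R) (hy : ∀ i, y i = 1 ∨ y i = -1)
    (hη : 0 < η)
    (w₀ : EuclideanSpace ℝ (Fin m × Fin d))
    (W : ℕ → EuclideanSpace ℝ (Fin m × Fin d)) (hW0 : W 0 = w₀)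
    (hWrec : ∀ t : ℕ, W (t + 1) = W t - η • gradient (empLoss a σ f x y) (W t))
    (hdescent : ∀ t : ℕ,
      empLoss a σ f x y (W (t + 1))
        ≤ empLoss a σ f x y (W t) - (η / 2) * ‖gradient (empLoss a σ f x y) (W t)‖ ^ 2)
    (w : EuclideanSpace ℝ (Fin m × Fin d)) (T : ℕ) (hT : 1 ≤ T)
    (hm : ∀ t : ℕ, t < T → 2 * L * R ^ 2 * ‖w - W t‖ ^ 2 ≤ Real.sqrt m) :
    (1 / (T : ℝ)) * ∑ t ∈ Finset.Icc 1 T, empLoss a σ f x y (W t)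
      ≤ 2 * empLoss a σ f x y w + 2 * ‖w - w₀‖ ^ 2 / (η * T)
        + empLoss a σ f x y w₀ / (2 * T) := by
  set F := empLoss a σ f x y
  have hsign : ∀ r : ℝ, r = 1 ∨ r = -1 → |r| ≤ 1 := by rintro r (rfl | rfl) <;> norm_num
  have hσd : ∀ z, HasDerivAt σ (deriv σ z) z :=
    fun z => (hσ.differentiable (by norm_num) z).hasDerivAt
  have hσd' : ∀ z, HasDerivAt (deriv σ) (deriv (deriv σ) z) z :=
    fun z => (hσ.differentiable_deriv_two z).hasDerivAt
  have hF : ∀ z, 0 ≤ F z := empLoss_nonneg fun u => (abs_nonneg _).trans (hfself u)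
  have hac : ∀ t < T, (1 - 1 / 4) * F (W t) - F w ≤ inner ℝ (gradient F (W t)) (W t - w) :=
    fun t ht => one_sub_mul_empLoss_sub_le_inner_gradient (fun j => hsign _ (ha j)) hσd hσd'
      hσ'' hfconv (hf.differentiable (by norm_num)) hfself hx (fun i => hsign _ (hy i))
      (by norm_num) (by linarith [hm t ht])
  have hregret := sum_Icc_le_of_descent_of_almostConvex hF (by norm_num) hη
    (fun t _ => hWrec t) (fun t _ => hdescent t) hac
  rw [hW0] at hregret
  have hT0 : (0 : ℝ) < T := by exact_mod_cast hT
  have hexpand : (2 * F w + 2 * ‖w - w₀‖ ^ 2 / (η * T) + F w₀ / (2 * T)) * T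
      = 2 * T * F w + 2 * (‖w - w₀‖ ^ 2 / (2 * η)) * 2 + F w₀ / 2 := by
    field_simp
  rw [one_div_mul_eq_div, div_le_iff₀ hT0, hexpand]
  have hdist : 0 ≤ ‖w - w₀‖ ^ 2 / (2 * η) := by positivity
  nlinarith [hF w, hF w₀]

/-- regret bound for GD under the descent condition when the
width dominates the distances to the comparator. -/
theorem train_loss_regret_wide
    {m d n : ℕ} (ℓ L R η : ℝ)
    (a : Fin m → ℝ) (ha : ∀ j, a j = 1 ∨ a j = -1)
    (σ : ℝ → ℝ) (hσ : ContDiff ℝ 2 σ)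
    (hσ' : ∀ u, |deriv σ u| ≤ ℓ) (hσ'' : ∀ u, |deriv (deriv σ) u| ≤ L)
    (f : ℝ → ℝ) (hf : ContDiff ℝ 2 f) (hfconv : ConvexOn ℝ Set.univ f)
    (hfnonneg : ∀ u, 0 ≤ f u) (hfself : ∀ u, |deriv f u| ≤ f u)
    (x : Fin n → EuclideanSpace ℝ (Fin d)) (y : Fin n → ℝ)
    (hx : ∀ i, ‖x i‖ ≤ R) (hy : ∀ i, y i = 1 ∨ y i = -1)
    (hη : 0 < η)
    (w₀ : EuclideanSpace ℝ (Fin m × Fin d))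
    (W : ℕ → EuclideanSpace ℝ (Fin m × Fin d)) (hW0 : W 0 = w₀)
    (hWrec : ∀ t : ℕ, W (t + 1) = W t - η • gradient (empLoss a σ f x y) (W t))
    (hdescent : ∀ t : ℕ,
      empLoss a σ f x y (W (t + 1))
        ≤ empLoss a σ f x y (W t) - (η / 2) * ‖gradient (empLoss a σ f x y) (W t)‖ ^ 2)
    (w : EuclideanSpace ℝ (Fin m × Fin d)) (T : ℕ) (hT : 1 ≤ T)
    (hm : ∀ t : ℕ, t < T → 2 * L * R ^ 2 * ‖w - W t‖ ^ 2 ≤ Real.sqrt m) :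
    (1 / (T : ℝ)) * ∑ t ∈ Finset.Icc 1 T, empLoss a σ f x y (W t)
      ≤ 2 * empLoss a σ f x y w + 2 * ‖w - w₀‖ ^ 2 / (η * T)
        + empLoss a σ f x y w₀ / (2 * T) :=
  train_loss_regret_wide_general L R η a ha σ hσ hσ'' f hf hfconv hfself x y hx hy hη w₀ W hW0 hWrec
    hdescent w T hT hm
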